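/- Let σ ∈ L, β = β_{σH}, let O ⊆ L/H be the orbit of σH under left multiplication by G, c = |O|, and F = ∏_{C ∈ O} (X − β_C) ∈ K[X]. If m is the multiplicity of β as a root of F, then m divides c and F equals the m-th power of the image in K[X] of the minimal polynomial of β over k; in particular F is the m-th power of (the image of) a monic polynomial irreducible over k, and c = m·deg(minpoly_k β). -/

import Mathlib

open MvPolynomial Polynomial

variable (k : Type*) {K : Type*} [Field k] [Field K] [Algebra k K] {n : ℕ}

/-- The ideal of `α`-relations. -/
noncomputable def relIdeal (α : Fin n → K) : Ideal (MvPolynomial (Fin n) k) :=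
  RingHom.ker (MvPolynomial.aeval α : MvPolynomial (Fin n) k →ₐ[k] K)

/-- The Galois group of `α` over `k`: permutations stabilizing the ideal of relations. -/
def galoisGroup (α : Fin n → K) : Subgroup (Equiv.Perm (Fin n)) where
  carrier := {σ | MvPolynomial.rename ⇑σ '' (relIdeal k α : Set (MvPolynomial (Fin n) k))
      = (relIdeal k α : Set (MvPolynomial (Fin n) k))}
  one_mem' := by
    have h : ∀ p : MvPolynomial (Fin n) k, rename ⇑(1 : Equiv.Perm (Fin n)) p = p := by
      intro p; simp [Equiv.Perm.coe_one, rename_id]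
    simp only [Set.mem_setOf_eq]
    rw [Set.image_congr' h]
    exact Set.image_id _
  mul_mem' := by
    intro σ τ hσ hτ
    simp only [Set.mem_setOf_eq] at *
    have h : ∀ p : MvPolynomial (Fin n) k,
        rename ⇑(σ * τ) p = rename ⇑σ (rename ⇑τ p) := by
      intro p; rw [rename_rename]; rfl
    rw [Set.image_congr' h]
    calc (fun p => rename ⇑σ (rename ⇑τ p)) '' (relIdeal k α : Set (MvPolynomial (Fin n) k))
        = rename ⇑σ '' (rename ⇑τ '' (relIdeal k α : Set (MvPolynomial (Fin n) k))) :=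
          (Set.image_comp _ _ _)
      _ = _ := by rw [hτ, hσ]
  inv_mem' := by
    intro σ hσ
    simp only [Set.mem_setOf_eq] at *
    conv_lhs => rw [← hσ]
    rw [← Set.image_comp]
    have h : ∀ p : MvPolynomial (Fin n) k,
        (rename ⇑σ⁻¹ ∘ rename ⇑σ) p = p := by
      intro p
      simp only [Function.comp_apply, rename_rename]
      have : (⇑σ⁻¹ ∘ ⇑σ) = id := by
        funext i; simp
      rw [this, rename_id]; rfl
    rw [Set.image_congr' h]
    exact Set.image_id _

/-! Since `∏ (X - α i)` is separable, has coefficients in `k` and its roots generate `K`, the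
extension `K/k` is Galois, and a permutation `g` lies in the Galois group of `α` exactly when some
`τ ∈ Gal(K/k)` satisfies `τ ∘ α = α ∘ g`; on the roots of the resolvent this reads
`β (g • C) = τ (β C)`. Hence every `τ` permutes the linear factors of `F`, so `F` is fixed by
`Gal(K/k)`, and the roots of `F` are exactly the conjugates of `β`. Galois invariance gives all of
them the same multiplicity `m`, so `F = (minpoly k β)^m`, and comparing degrees gives
`c = m * deg (minpoly k β)`. -/

namespace Polynomial

variable {K : Type*} [Field K]

theorem eq_pow_of_isRoot_iff {p q : K[X]} {m : ℕ} (hp : p.Monic) (hps : p.Splits)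
    (hq : q.Monic) (hqs : q.Splits) (hqsep : q.Separable)
    (hroots : ∀ a, p.IsRoot a ↔ q.IsRoot a) (hmult : ∀ a, p.IsRoot a → p.rootMultiplicity a = m) :
    p = q ^ m := by
  classical
  have hroots_eq : p.roots = (q ^ m).roots := by
    ext a
    rw [roots_pow, Multiset.count_nsmul, count_roots, count_roots]
    by_cases ha : q.IsRoot a
    · rw [hmult a ((hroots a).2 ha), ← count_roots,
        Multiset.count_eq_one_of_mem (nodup_roots hqsep) ((mem_roots hq.ne_zero).2 ha), mul_one]
    · rw [rootMultiplicity_eq_zero ha, rootMultiplicity_eq_zero (mt (hroots a).1 ha), mul_zero]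
  rw [hps.eq_prod_roots_of_monic hp, (hqs.pow m).eq_prod_roots_of_monic (hq.pow m), hroots_eq]

variable {k : Type*} [Field k] [Algebra k K]

theorem rootSet_eq_range_of_map_eq_prod {ι : Type*} [Fintype ι] {α : ι → K} {f : k[X]}
    (hf : f.map (algebraMap k K) = ∏ i, (X - C (α i))) :
    f.rootSet K = Set.range α := by
  classical
  ext a
  simp [rootSet, aroots, hf, roots_prod, Finset.prod_ne_zero_iff, X_sub_C_ne_zero]

variable [IsGalois k K]

theorem eq_minpoly_pow_of_forall_map_eq {p : K[X]} (hp : p.Monic) (hps : p.Splits)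
    (hinv : ∀ τ : Gal(K/k), p.map (τ : K →+* K) = p) {b : K} (hb : p.IsRoot b)
    (hconj : ∀ a, p.IsRoot a → minpoly k a = minpoly k b) :
    p = (minpoly k b).map (algebraMap k K) ^ p.rootMultiplicity b := by
  have hint : IsIntegral k b := Algebra.IsIntegral.isIntegral b
  have hroot_conj : ∀ τ : Gal(K/k), p.IsRoot (τ b) := fun τ => by
    simpa [hinv τ] using hb.map (f := (τ : K →+* K))
  refine eq_pow_of_isRoot_iff hp hps ((minpoly.monic hint).map _) (Normal.splits inferInstance b)
    (Separable.map (Algebra.IsSeparable.isSeparable k b)) (fun a => ?_) fun a ha => ?_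
  · rw [IsRoot.def (p := map _ _), eval_map_algebraMap,
      ← minpoly.eq_iff_aeval_minpoly_eq_zero hint]
    refine ⟨fun ha => (hconj a ha).symm, fun ha => ?_⟩
    obtain ⟨τ, rfl⟩ := (Normal.minpoly_eq_iff_mem_orbit K).1 ha.symm
    exact hroot_conj τ
  · obtain ⟨τ, rfl⟩ := (Normal.minpoly_eq_iff_mem_orbit K).1 (hconj a ha)
    rw [eq_rootMultiplicity_map (f := (τ : K →+* K)) τ.injective b, hinv τ]
    rfl

open MulAction in
theorem prod_orbit_X_sub_C_eq_minpoly_pow {Γ Ω : Type*} [Group Γ] [MulAction Γ Ω] (β : Ω → K)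
    (x₀ : Ω) (hfin : (orbit Γ x₀).Finite)
    (hΓ : ∀ γ : Γ, ∃ τ : Gal(K/k), β (γ • x₀) = τ (β x₀))
    (hGal : ∀ τ : Gal(K/k), ∃ γ : Γ, ∀ x, β (γ • x) = τ (β x)) :
    ∏ x ∈ hfin.toFinset, (X - C (β x)) = (minpoly k (β x₀)).map (algebraMap k K) ^
      (∏ x ∈ hfin.toFinset, (X - C (β x))).rootMultiplicity (β x₀) := by
  refine eq_minpoly_pow_of_forall_map_eq (monic_prod_X_sub_C _ _)
    (Splits.prod fun x _ => Splits.X_sub_C _) (fun τ => ?_) ?_ fun a ha => ?_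
  · obtain ⟨γ, hγ⟩ := hGal τ
    simp only [Polynomial.map_prod, Polynomial.map_sub, map_X, map_C, RingHom.coe_coe, ← hγ]
    refine Finset.prod_equiv (MulAction.toPerm γ) (fun x => ?_) fun _ _ => rfl
    simp only [Set.Finite.mem_toFinset, toPerm_apply, ← orbit_eq_iff, orbit_smul]
  · exact (isRoot_prod _ _ _).2 ⟨x₀, by simp [mem_orbit_self]⟩
  · obtain ⟨x, hx, hxa⟩ := (isRoot_prod _ _ _).1 ha
    obtain ⟨γ, rfl⟩ := (Set.Finite.mem_toFinset _).1 hx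
    obtain ⟨τ, hτ⟩ := hΓ γ
    rw [← root_X_sub_C.1 hxa, hτ, minpoly.algEquiv_eq]

end Polynomial

theorem MulAction.orbit_subgroupOf_eq_setOf {M Ω : Type*} [Group M] {G L : Subgroup M}
    (hGL : G ≤ L) [MulAction L Ω] (x : Ω) :
    orbit (G.subgroupOf L) x = {y | ∃ (g : M) (hg : g ∈ G), (⟨g, hGL hg⟩ : L) • x = y} := by
  ext y
  constructor
  · rintro ⟨⟨⟨g, hgL⟩, hg⟩, rfl⟩
    exact ⟨g, hg, rfl⟩
  · rintro ⟨g, hg, rfl⟩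
    exact ⟨⟨⟨g, hGL hg⟩, hg⟩, rfl⟩

theorem Function.Injective.exists_perm_comp_eq {ι X : Type*} [Finite ι] {α : ι → X}
    (hα : Function.Injective α) {f : X → X} (hf : Function.Injective f)
    (hmaps : Set.MapsTo f (Set.range α) (Set.range α)) :
    ∃ g : Equiv.Perm ι, f ∘ α = α ∘ g := by
  choose g hg using fun i => hmaps (Set.mem_range_self (f := α) i)
  have hg_inj : Function.Injective g := fun i j hij => hα (hf (by rw [← hg i, ← hg j, hij]))
  exact ⟨Equiv.ofBijective g (Finite.injective_iff_bijective.1 hg_inj), funext fun i => (hg i).symm⟩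

section GaloisGroup

variable {k}

theorem isGalois_of_map_eq_prod_X_sub_C {ι : Type*} [Fintype ι] {α : ι → K}
    (hinj : Function.Injective α) (hgen : Algebra.adjoin k (Set.range α) = ⊤) {f : k[X]}
    (hf : f.map (algebraMap k K) = ∏ i, (Polynomial.X - Polynomial.C (α i))) :
    IsGalois k K := by
  have : f.IsSplittingField k K :=
    ⟨hf ▸ Splits.prod fun i _ => Splits.X_sub_C _, by rwa [rootSet_eq_range_of_map_eq_prod hf]⟩
  refine IsGalois.of_separable_splitting_field (p := f) ?_
  rw [← separable_map (algebraMap k K), hf]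
  exact separable_prod_X_sub_C_iff.2 hinj

theorem mem_relIdeal {α : Fin n → K} {Q : MvPolynomial (Fin n) k} :
    Q ∈ relIdeal k α ↔ aeval α Q = 0 :=
  RingHom.mem_ker

theorem aeval_rename_of_comp_eq {α : Fin n → K} {g : Fin n → Fin n} {τ : K →ₐ[k] K}
    (h : ⇑τ ∘ α = α ∘ g) (Q : MvPolynomial (Fin n) k) :
    aeval α (rename g Q) = τ (aeval α Q) := by
  rw [aeval_rename, ← h, comp_aeval_apply]
  rfl

theorem mem_galoisGroup_of_comp_eq {α : Fin n → K} {g : Equiv.Perm (Fin n)} (τ : Gal(K/k))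
    (h : ⇑τ ∘ α = α ∘ g) : g ∈ galoisGroup k α := by
  have hmem : ∀ Q, rename g Q ∈ relIdeal k α ↔ Q ∈ relIdeal k α := fun Q => by
    simp only [mem_relIdeal, aeval_rename_of_comp_eq (τ := (τ : K →ₐ[k] K)) h]
    exact map_eq_zero_iff _ τ.injective
  show rename g '' _ = _
  ext Q
  refine ⟨?_, fun hQ => ⟨rename g.symm Q, ?_, ?_⟩⟩
  · rintro ⟨Q, hQ, rfl⟩
    exact (hmem Q).2 hQ
  · rw [SetLike.mem_coe, ← hmem, rename_rename, g.self_comp_symm, rename_id_apply]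
    exact hQ
  · rw [rename_rename, g.self_comp_symm, rename_id_apply]

theorem exists_comp_eq_of_mem_galoisGroup [Algebra.IsAlgebraic k K] {α : Fin n → K}
    (hgen : Algebra.adjoin k (Set.range α) = ⊤) {g : Equiv.Perm (Fin n)}
    (hg : g ∈ galoisGroup k α) : ∃ τ : Gal(K/k), ⇑τ ∘ α = α ∘ g := by
  have hsurj : Function.Surjective (aeval α : MvPolynomial (Fin n) k →ₐ[k] K) := by
    rw [← AlgHom.range_eq_top, ← Algebra.adjoin_range_eq_range_aeval, hgen]
  have hg' : rename g '' (relIdeal k α : Set (MvPolynomial (Fin n) k)) = relIdeal k α := hg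
  have hker : RingHom.ker (MvPolynomial.aeval α : MvPolynomial (Fin n) k →ₐ[k] K).toRingHom ≤
      RingHom.ker ((MvPolynomial.aeval α).comp (rename g) :
        MvPolynomial (Fin n) k →ₐ[k] K).toRingHom := fun Q hQ =>
    show rename g Q ∈ (relIdeal k α : Set _) from hg' ▸ ⟨Q, hQ, rfl⟩
  let t := AlgHom.liftOfSurjective _ hsurj _ hker
  refine ⟨AlgEquiv.ofBijective t (Algebra.IsAlgebraic.algHom_bijective t), funext fun i => ?_⟩
  simpa using AlgHom.liftOfSurjective_apply _ hsurj _ hker (X i)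

theorem apply_smul_eq_of_comp_eq {α : Fin n → K} {L H : Subgroup (Equiv.Perm (Fin n))}
    {P : MvPolynomial (Fin n) k} {β : L ⧸ H.subgroupOf L → K}
    (hβ : ∀ σ : L, β (QuotientGroup.mk σ) = aeval α (rename ⇑(σ : Equiv.Perm (Fin n)) P))
    {g : L} {τ : K →ₐ[k] K} (h : ⇑τ ∘ α = α ∘ ⇑(g : Equiv.Perm (Fin n)))
    (C : L ⧸ H.subgroupOf L) : β (g • C) = τ (β C) := by
  induction C using QuotientGroup.induction_on with
  | H σ =>
    rw [MulAction.Quotient.smul_mk, smul_eq_mul, hβ, hβ, ← aeval_rename_of_comp_eq h,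
      rename_rename]
    rfl

end GaloisGroup

theorem factor_eq_pow_minpoly_of_multiplicity
    (α : Fin n → K) (hinj : Function.Injective α)
    (hcoeff : ∀ m : ℕ, (∏ i : Fin n, (Polynomial.X - Polynomial.C (α i)) : K[X]).coeff m ∈
      (algebraMap k K).range)
    (hgen : Algebra.adjoin k (Set.range α) = ⊤)
    (H L : Subgroup (Equiv.Perm (Fin n))) (hGL : galoisGroup k α ≤ L)
    (P : MvPolynomial (Fin n) k)
    (β : (↥L ⧸ H.subgroupOf L) → K)
    (hβ : ∀ σ : ↥L, β (QuotientGroup.mk σ) =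
      MvPolynomial.aeval α (rename ⇑(σ : Equiv.Perm (Fin n)) P))
    (σ : Equiv.Perm (Fin n)) (hσ : σ ∈ L)
    (O : Set (↥L ⧸ H.subgroupOf L))
    (hO : O = {C | ∃ (g : Equiv.Perm (Fin n)) (hg : g ∈ galoisGroup k α),
      (⟨g, hGL hg⟩ : ↥L) • (QuotientGroup.mk (⟨σ, hσ⟩ : ↥L) : ↥L ⧸ H.subgroupOf L) = C})
    (c : ℕ) (hc : c = Nat.card O)
    (F : K[X])
    (hF : F = ∏ C ∈ (Set.toFinite O).toFinset, (Polynomial.X - Polynomial.C (β C)))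
    (m : ℕ) (hm : m = Polynomial.rootMultiplicity (β (QuotientGroup.mk (⟨σ, hσ⟩ : ↥L))) F) :
    m ∣ c ∧
    F = ((minpoly k (β (QuotientGroup.mk (⟨σ, hσ⟩ : ↥L)))).map (algebraMap k K)) ^ m ∧
    (minpoly k (β (QuotientGroup.mk (⟨σ, hσ⟩ : ↥L)))).Monic ∧
    Irreducible (minpoly k (β (QuotientGroup.mk (⟨σ, hσ⟩ : ↥L)))) ∧
    c = m * (minpoly k (β (QuotientGroup.mk (⟨σ, hσ⟩ : ↥L)))).natDegree := by
  obtain ⟨f, hf⟩ := (mem_lifts _).1 ((lifts_iff_coeff_lifts _).2 hcoeff)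
  have : IsGalois k K := isGalois_of_map_eq_prod_X_sub_C hinj hgen hf
  set Γ := (galoisGroup k α).subgroupOf L
  set base : L ⧸ H.subgroupOf L := QuotientGroup.mk ⟨σ, hσ⟩
  have hO_orbit : O = MulAction.orbit (↥Γ) base :=
    hO.trans (MulAction.orbit_subgroupOf_eq_setOf hGL base).symm
  subst hO_orbit
  have hΓ : ∀ γ : Γ, ∃ τ : Gal(K/k), β (γ • base) = τ (β base) := fun γ => by
    obtain ⟨τ, hτ⟩ := exists_comp_eq_of_mem_galoisGroup hgen (Subgroup.mem_subgroupOf.1 γ.2)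
    exact ⟨τ, apply_smul_eq_of_comp_eq hβ (τ := (τ : K →ₐ[k] K)) hτ base⟩
  have hGal : ∀ τ : Gal(K/k), ∃ γ : Γ, ∀ C, β (γ • C) = τ (β C) := fun τ => by
    obtain ⟨g, hg⟩ := hinj.exists_perm_comp_eq τ.injective
      (rootSet_eq_range_of_map_eq_prod hf ▸ rootSet_mapsTo (τ : K →ₐ[k] K))
    have hgG := mem_galoisGroup_of_comp_eq τ hg
    exact ⟨⟨⟨g, hGL hgG⟩, hgG⟩, apply_smul_eq_of_comp_eq hβ (τ := (τ : K →ₐ[k] K)) hg⟩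
  have hFpow := prod_orbit_X_sub_C_eq_minpoly_pow β base (Set.toFinite _) hΓ hGal
  rw [← hF, ← hm] at hFpow
  have hint : IsIntegral k (β base) := Algebra.IsIntegral.isIntegral _
  have hdeg : c = m * (minpoly k (β base)).natDegree := by
    rw [hc, Nat.card_coe_set_eq, Set.ncard_eq_toFinset_card _ (Set.toFinite _),
      ← natDegree_finsetProd_X_sub_C_eq_card _ β, ← hF, hFpow, natDegree_pow, natDegree_map]
  exact ⟨Dvd.intro _ hdeg.symm, hFpow, minpoly.monic hint, minpoly.irreducible hint, hdeg⟩
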